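/- Let [X,B,m,ν] be a reversible random walk space and let Ω₁ ⊆ Ω₂ be sets in B, each satisfying the standing assumptions (Ω_i and (Ω_i)_m m-connected, 0 < ν(Ω_i) < ν((Ω_i)_m) < ∞, and Ω_i satisfying a 2-Poincaré inequality). Then T_m(Ω₁) ≤ T_m(Ω₂). -/

import Mathlib

open MeasureTheory ENNReal Filter Topology

namespace RandomWalkSpace

variable {X : Type*} [MeasurableSpace X]

/-- A random walk: a family of probability measures `m x`, measurably depending on `x`. -/
def IsRandomWalk (m : X → Measure X) : Prop :=
  (∀ x, IsProbabilityMeasure (m x)) ∧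
    ∀ A : Set X, MeasurableSet A → Measurable fun x => m x A

/-- Reversibility (detailed balance) of `ν` with respect to the random walk `m`. -/
def Reversible (m : X → Measure X) (ν : Measure X) : Prop :=
  ∀ A B : Set X, MeasurableSet A → MeasurableSet B →
    ∫⁻ x in A, m x B ∂ν = ∫⁻ x in B, m x A ∂ν

/-- The `m`-boundary of `Ω`. -/
def mBoundary (m : X → Measure X) (Ω : Set X) : Set X :=
  {x | x ∉ Ω ∧ 0 < m x Ω}

/-- The `m`-closure of `Ω`. -/
def mClosure (m : X → Measure X) (Ω : Set X) : Set X :=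
  Ω ∪ mBoundary m Ω

/-- `D` is `m`-connected (with respect to `ν`). -/
def mConnected (m : X → Measure X) (ν : Measure X) (D : Set X) : Prop :=
  ∀ A B : Set X, MeasurableSet A → MeasurableSet B → A ⊆ D → B ⊆ D →
    A ∪ B = D → 0 < ν A → 0 < ν B → 0 < ∫⁻ x in A, m x B ∂ν

/-- The `m`-perimeter of `Ω`. -/
noncomputable def mPerimeter (m : X → Measure X) (ν : Measure X) (Ω : Set X) : ℝ≥0∞ :=
  ∫⁻ x in Ω, m x Ωᶜ ∂ν

/-- `survival m Ω n x` is the mass of paths of `n` jumps starting at `x` that stay in `Ω`. -/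
noncomputable def survival (m : X → Measure X) (Ω : Set X) : ℕ → X → ℝ≥0∞
  | 0, _ => 1
  | n + 1, x => ∫⁻ y in Ω, survival m Ω n y ∂(m x)

/-- `gseq m ν Ω n` is the mass of paths of `n` jumps that start in `Ω` and stay in `Ω`. -/
noncomputable def gseq (m : X → Measure X) (ν : Measure X) (Ω : Set X) (n : ℕ) : ℝ≥0∞ :=
  ∫⁻ x in Ω, survival m Ω n x ∂ν

/-- The spectral `m`-heat content of `Ω` at time `t`. -/
noncomputable def heatContent (m : X → Measure X) (ν : Measure X) (Ω : Set X) (t : ℝ) : ℝ≥0∞ :=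
  ∑' k : ℕ, gseq m ν Ω k * ENNReal.ofReal (Real.exp (-t) * t ^ k / (Nat.factorial k))

/-- The nonlocal `p`-energy `∫_{Ω_m×Ω_m} |f(y) − f(x)|^p dm_x(y)dν(x)`. -/
noncomputable def energy (m : X → Measure X) (ν : Measure X) (Ω : Set X) (p : ℝ)
    (f : X → ℝ) : ℝ≥0∞ :=
  ∫⁻ x in mClosure m Ω, ∫⁻ y in mClosure m Ω, ENNReal.ofReal (|f y - f x| ^ p) ∂(m x) ∂ν

/-- `f ∈ L^p_0(Ω_m,ν)`: `f ∈ L^p(Ω_m,ν)` and `f = 0` ν-a.e. on `∂_m Ω`. -/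
def InLp0 (m : X → Measure X) (ν : Measure X) (Ω : Set X) (p : ℝ) (f : X → ℝ) : Prop :=
  MemLp f (ENNReal.ofReal p) (ν.restrict (mClosure m Ω)) ∧
    ∀ᵐ x ∂ν.restrict (mBoundary m Ω), f x = 0

/-- `Ω` satisfies a `p`-Poincaré inequality. -/
def PoincareInequality (m : X → Measure X) (ν : Measure X) (Ω : Set X) (p : ℝ) : Prop :=
  ∃ lam : ℝ, 0 < lam ∧ ∀ f : X → ℝ, InLp0 m ν Ω p f →
    ENNReal.ofReal lam * ∫⁻ x in Ω, ENNReal.ofReal (|f x| ^ p) ∂ν ≤ energy m ν Ω p f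

/-- The `m`-stress function of `Ω`. -/
def IsStressFunction (m : X → Measure X) (ν : Measure X) (Ω : Set X) (f : X → ℝ) : Prop :=
  InLp0 m ν Ω 2 f ∧ (∀ᵐ x ∂ν.restrict (mClosure m Ω), 0 ≤ f x) ∧
    ∀ᵐ x ∂ν.restrict Ω, -∫ y in mClosure m Ω, (f y - f x) ∂(m x) = 1

/-- The `p`-torsion function of `Ω`. -/
def IsPStressFunction (m : X → Measure X) (ν : Measure X) (Ω : Set X) (p : ℝ)
    (f : X → ℝ) : Prop :=
  InLp0 m ν Ω p f ∧ (∀ᵐ x ∂ν.restrict (mClosure m Ω), 0 ≤ f x) ∧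
    ∀ᵐ x ∂ν.restrict Ω,
      -∫ y in mClosure m Ω, |f y - f x| ^ (p - 2) * (f y - f x) ∂(m x) = 1

/-- The Rayleigh quotient infimum `λ_{m,p}(Ω)`. -/
noncomputable def rayleigh (m : X → Measure X) (ν : Measure X) (Ω : Set X) (p : ℝ) : ℝ≥0∞ :=
  ⨅ (f : X → ℝ) (_ : InLp0 m ν Ω p f)
    (_ : 0 < ∫⁻ x in Ω, ENNReal.ofReal (|f x| ^ p) ∂ν),
    (energy m ν Ω p f / 2) / ∫⁻ x in Ω, ENNReal.ofReal (|f x| ^ p) ∂ν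

/-- The `m`-Cheeger constant `h_1^m(Ω)`. -/
noncomputable def cheeger1 (m : X → Measure X) (ν : Measure X) (Ω : Set X) : ℝ≥0∞ :=
  ⨅ (E : Set X) (_ : MeasurableSet E) (_ : E ⊆ Ω) (_ : 0 < ν E),
    mPerimeter m ν E / ν E

/-- The `m`-`p`-Cheeger constant `h_p^m(Ω)`. -/
noncomputable def cheegerP (m : X → Measure X) (ν : Measure X) (Ω : Set X) (p : ℝ) : ℝ≥0∞ :=
  ⨅ (E : Set X) (_ : MeasurableSet E) (_ : E ⊆ Ω) (_ : 0 < ν E),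
    mPerimeter m ν E / ν E ^ p

/-- The functional `F_{m,p}(f) = (1/(2p)) ∫∫ |∇f|^p − ∫_Ω f`, with values in `EReal`. -/
noncomputable def torsionalFunctional (m : X → Measure X) (ν : Measure X) (Ω : Set X)
    (p : ℝ) (f : X → ℝ) : EReal :=
  ((energy m ν Ω p f / ENNReal.ofReal (2 * p) : ℝ≥0∞) : EReal) -
    ((∫ x in Ω, f x ∂ν : ℝ) : EReal)

end RandomWalkSpace

/-!
Write `Q_Ω(f, g) = ∫∫_{Ω_m × Ω_m} (f y - f x) (g y - g x) dm_x(y) dν(x)`. Swapping `x` and `y`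
(reversibility) and then integrating in `y` first turns the equation of the stress function into
the Green formula `Q_Ω(f_Ω, w) = 2 ∫_Ω w` for every `w ∈ L²(Ω_m)` vanishing on `∂_mΩ`.
Let `w` be `f_{Ω₁}` extended by zero. Reversibility forbids jumps between `Ω₁` and the complement
of `(Ω₁)_m`, so `Q_{Ω₂}(w, w) = Q_{Ω₁}(w, w) = 2 T(Ω₁)`, while `Q_{Ω₂}(f_{Ω₂}, w) = 2 T(Ω₁)` and
`Q_{Ω₂}(f_{Ω₂}, f_{Ω₂}) = 2 T(Ω₂)`. Hence
`0 ≤ Q_{Ω₂}(f_{Ω₂} - w, f_{Ω₂} - w) = 2 T(Ω₂) - 2 T(Ω₁)`.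
-/

open ProbabilityTheory

namespace RandomWalkSpace

variable {X : Type*} [MeasurableSpace X]

section Kernel

noncomputable def edgeMeasure (κ : Kernel X X) (ν : Measure X) (S : Set X) : Measure (X × X) :=
  (ν ⊗ₘ κ).restrict (S ×ˢ S)

noncomputable def dirichletForm (κ : Kernel X X) (ν : Measure X) (S : Set X)
    (f g : X → ℝ) : ℝ :=
  ∫ p, (f p.2 - f p.1) * (g p.2 - g p.1) ∂(edgeMeasure κ ν S)

variable {κ : Kernel X X} [IsMarkovKernel κ] {ν : Measure X} [SFinite ν] {S : Set X}

lemma isFiniteMeasure_edgeMeasure (hS : MeasurableSet S) (hfin : ν S ≠ ⊤) :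
    IsFiniteMeasure (edgeMeasure κ ν S) := by
  refine ⟨?_⟩
  calc edgeMeasure κ ν S Set.univ
      ≤ (ν ⊗ₘ κ) (S ×ˢ Set.univ) := by
        rw [edgeMeasure, Measure.restrict_apply_univ]
        exact measure_mono (Set.prod_mono le_rfl (Set.subset_univ _))
    _ = ν S := by simp [Measure.compProd_apply_prod hS MeasurableSet.univ]
    _ < ⊤ := hfin.lt_top

lemma map_fst_edgeMeasure_le (hS : MeasurableSet S) :
    (edgeMeasure κ ν S).map Prod.fst ≤ ν.restrict S := by
  calc (edgeMeasure κ ν S).map Prod.fst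
      ≤ ((ν ⊗ₘ κ).restrict (Prod.fst ⁻¹' S)).map Prod.fst :=
        Measure.map_mono (Measure.restrict_mono (fun p hp => hp.1) le_rfl) measurable_fst
    _ = ν.restrict S := by
        rw [← Measure.restrict_map measurable_fst hS, ← Measure.fst, Measure.fst_compProd]

lemma measurePreserving_swap_edgeMeasure (hκ : κ.IsReversible ν) (hS : MeasurableSet S)
    (hfin : ν S ≠ ⊤) :
    MeasurePreserving Prod.swap (edgeMeasure κ ν S) (edgeMeasure κ ν S) := by
  have := isFiniteMeasure_edgeMeasure (κ := κ) hS hfin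
  refine ⟨measurable_swap, Measure.ext_prod fun {s t} hs ht => ?_⟩
  rw [Measure.map_apply measurable_swap (hs.prod ht), Set.preimage_swap_prod, edgeMeasure,
    Measure.restrict_apply (ht.prod hs), Measure.restrict_apply (hs.prod ht),
    Set.prod_inter_prod, Set.prod_inter_prod,
    Measure.compProd_apply_prod (ht.inter hS) (hs.inter hS),
    Measure.compProd_apply_prod (hs.inter hS) (ht.inter hS)]
  exact hκ (ht.inter hS) (hs.inter hS)

lemma map_snd_edgeMeasure_le (hκ : κ.IsReversible ν) (hS : MeasurableSet S)
    (hfin : ν S ≠ ⊤) :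
    (edgeMeasure κ ν S).map Prod.snd ≤ ν.restrict S := by
  rw [← (measurePreserving_swap_edgeMeasure hκ hS hfin).map_eq,
    Measure.map_map measurable_snd measurable_swap]
  exact map_fst_edgeMeasure_le hS

variable {p : ℝ≥0∞} {f : X → ℝ}

lemma memLp_comp_fst_edgeMeasure (hS : MeasurableSet S) (hf : MemLp f p (ν.restrict S)) :
    MemLp (fun q : X × X => f q.1) p (edgeMeasure κ ν S) :=
  (hf.mono_measure (map_fst_edgeMeasure_le hS)).comp_of_map measurable_fst.aemeasurable

lemma memLp_comp_snd_edgeMeasure (hκ : κ.IsReversible ν) (hS : MeasurableSet S)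
    (hfin : ν S ≠ ⊤) (hf : MemLp f p (ν.restrict S)) :
    MemLp (fun q : X × X => f q.2) p (edgeMeasure κ ν S) :=
  (hf.mono_measure (map_snd_edgeMeasure_le hκ hS hfin)).comp_of_map measurable_snd.aemeasurable

lemma memLp_sub_edgeMeasure (hκ : κ.IsReversible ν) (hS : MeasurableSet S) (hfin : ν S ≠ ⊤)
    (hf : MemLp f p (ν.restrict S)) :
    MemLp (fun q : X × X => f q.2 - f q.1) p (edgeMeasure κ ν S) :=
  (memLp_comp_snd_edgeMeasure hκ hS hfin hf).sub (memLp_comp_fst_edgeMeasure hS hf)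

variable {f' g : X → ℝ}

lemma dirichletForm_congr_ae_left (hκ : κ.IsReversible ν) (hS : MeasurableSet S)
    (hfin : ν S ≠ ⊤) (h : f =ᵐ[ν.restrict S] f') :
    dirichletForm κ ν S f g = dirichletForm κ ν S f' g := by
  have h₁ : ∀ᵐ q ∂edgeMeasure κ ν S, f q.1 = f' q.1 :=
    ae_of_ae_map measurable_fst.aemeasurable (ae_mono (map_fst_edgeMeasure_le hS) h)
  have h₂ : ∀ᵐ q ∂edgeMeasure κ ν S, f q.2 = f' q.2 :=
    ae_of_ae_map measurable_snd.aemeasurable (ae_mono (map_snd_edgeMeasure_le hκ hS hfin) h)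
  refine integral_congr_ae ?_
  filter_upwards [h₁, h₂] with q hq₁ hq₂
  rw [hq₁, hq₂]

lemma two_mul_dirichletForm_le (hκ : κ.IsReversible ν) (hS : MeasurableSet S)
    (hfin : ν S ≠ ⊤) (hf : MemLp f 2 (ν.restrict S)) (hg : MemLp g 2 (ν.restrict S)) :
    2 * dirichletForm κ ν S f g ≤ dirichletForm κ ν S f f + dirichletForm κ ν S g g := by
  have hDf := memLp_sub_edgeMeasure hκ hS hfin hf
  have hDg := memLp_sub_edgeMeasure hκ hS hfin hg
  calc 2 * dirichletForm κ ν S f g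
      = ∫ q, 2 * ((f q.2 - f q.1) * (g q.2 - g q.1)) ∂(edgeMeasure κ ν S) :=
        (integral_const_mul _ _).symm
    _ ≤ ∫ q, ((f q.2 - f q.1) * (f q.2 - f q.1) + (g q.2 - g q.1) * (g q.2 - g q.1))
          ∂(edgeMeasure κ ν S) :=
        integral_mono ((hDf.integrable_mul hDg).const_mul 2)
          ((hDf.integrable_mul hDf).add (hDg.integrable_mul hDg))
          fun q => by nlinarith [sq_nonneg (f q.2 - f q.1 - (g q.2 - g q.1))]
    _ = dirichletForm κ ν S f f + dirichletForm κ ν S g g :=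
        integral_add (hDf.integrable_mul hDf) (hDg.integrable_mul hDg)

lemma dirichletForm_eq_neg_two_mul_integral (hκ : κ.IsReversible ν) (hS : MeasurableSet S)
    (hfin : ν S ≠ ⊤) (hf : MemLp f 2 (ν.restrict S)) (hg : MemLp g 2 (ν.restrict S)) :
    dirichletForm κ ν S f g
      = -2 * ∫ x in S, (∫ y in S, (f y - f x) ∂(κ x)) * g x ∂ν := by
  have hDf := memLp_sub_edgeMeasure hκ hS hfin hf
  have hint₁ : Integrable (fun q : X × X => (f q.2 - f q.1) * g q.1) (edgeMeasure κ ν S) :=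
    hDf.integrable_mul (memLp_comp_fst_edgeMeasure hS hg)
  have hint₂ : Integrable (fun q : X × X => (f q.2 - f q.1) * g q.2) (edgeMeasure κ ν S) :=
    hDf.integrable_mul (memLp_comp_snd_edgeMeasure hκ hS hfin hg)
  have hswap : ∫ q, (f q.2 - f q.1) * g q.2 ∂(edgeMeasure κ ν S)
      = -∫ q, (f q.2 - f q.1) * g q.1 ∂(edgeMeasure κ ν S) := by
    rw [← integral_neg, ← (measurePreserving_swap_edgeMeasure hκ hS hfin).integral_comp
      MeasurableEquiv.prodComm.measurableEmbedding]
    congr with q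
    simp only [Prod.fst_swap, Prod.snd_swap]
    ring
  have hdisint : ∫ q, (f q.2 - f q.1) * g q.1 ∂(edgeMeasure κ ν S)
      = ∫ x in S, (∫ y in S, (f y - f x) ∂(κ x)) * g x ∂ν := by
    rw [edgeMeasure, Measure.setIntegral_compProd hS hS hint₁]
    congr with x
    exact integral_mul_const (g x) _
  calc dirichletForm κ ν S f g
      = ∫ q, (f q.2 - f q.1) * g q.2 ∂(edgeMeasure κ ν S)
        - ∫ q, (f q.2 - f q.1) * g q.1 ∂(edgeMeasure κ ν S) := by
        rw [← integral_sub hint₂ hint₁, dirichletForm]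
        congr with q
        ring
    _ = _ := by rw [hswap, hdisint]; ring

end Kernel

section RandomWalk

variable {m : X → Measure X} {ν : Measure X} {Ω Ω' : Set X} {f g w : X → ℝ}

def IsRandomWalk.kernel (hm : IsRandomWalk m) : Kernel X X :=
  ⟨m, Measure.measurable_of_measurable_coe _ hm.2⟩

instance IsRandomWalk.isMarkovKernel_kernel (hm : IsRandomWalk m) : IsMarkovKernel hm.kernel :=
  ⟨hm.1⟩

lemma Reversible.isReversible_kernel (hm : IsRandomWalk m) (hrev : Reversible m ν) :
    hm.kernel.IsReversible ν :=
  fun _ _ hA hB => hrev _ _ hA hB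

lemma measurableSet_mBoundary (hm : IsRandomWalk m) (hΩ : MeasurableSet Ω) :
    MeasurableSet (mBoundary m Ω) :=
  hΩ.compl.inter (hm.2 Ω hΩ measurableSet_Ioi)

lemma measurableSet_mClosure (hm : IsRandomWalk m) (hΩ : MeasurableSet Ω) :
    MeasurableSet (mClosure m Ω) :=
  hΩ.union (measurableSet_mBoundary hm hΩ)

lemma measure_eq_zero_of_notMem_mClosure {x : X} (hx : x ∉ mClosure m Ω) : m x Ω = 0 := by
  by_contra h
  exact hx (Or.inr ⟨fun hxΩ => hx (Or.inl hxΩ), pos_iff_ne_zero.2 h⟩)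

lemma IsStressFunction.memLp (hf : IsStressFunction m ν Ω f) :
    MemLp f 2 (ν.restrict (mClosure m Ω)) := by
  simpa using hf.1.1

lemma IsStressFunction.indicator_ae_eq (hm : IsRandomWalk m) (hΩ : MeasurableSet Ω)
    (hf : IsStressFunction m ν Ω f) :
    Ω.indicator f =ᵐ[ν.restrict (mClosure m Ω)] f := by
  refine (ae_restrict_union_iff _ _ _).2 ⟨?_, ?_⟩
  · filter_upwards [ae_restrict_mem hΩ] with x hx
    exact Set.indicator_of_mem hx f
  · filter_upwards [hf.1.2, ae_restrict_mem (measurableSet_mBoundary hm hΩ)] with x h0 hx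
    rw [Set.indicator_of_notMem hx.1, h0]

lemma memLp_indicator_of_mClosure {p : ℝ≥0∞} (hΩ' : MeasurableSet Ω')
    (hg : MemLp g p (ν.restrict (mClosure m Ω'))) (T : Set X) :
    MemLp (Ω'.indicator g) p (ν.restrict T) := by
  refine (memLp_indicator_iff_restrict hΩ').2 (hg.mono_measure ?_)
  rw [Measure.restrict_restrict hΩ']
  exact Measure.restrict_mono (Set.inter_subset_left.trans Set.subset_union_left) le_rfl

variable [SFinite ν]

lemma compProd_compl_mClosure_prod_eq_zero (hm : IsRandomWalk m) (hΩ : MeasurableSet Ω) :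
    (ν ⊗ₘ hm.kernel) ((mClosure m Ω)ᶜ ×ˢ Ω) = 0 := by
  rw [Measure.compProd_apply_prod (measurableSet_mClosure hm hΩ).compl hΩ]
  exact (setLIntegral_congr_fun (measurableSet_mClosure hm hΩ).compl
    fun _ hx => measure_eq_zero_of_notMem_mClosure hx).trans lintegral_zero

lemma compProd_prod_compl_mClosure_eq_zero (hm : IsRandomWalk m) (hrev : Reversible m ν)
    (hΩ : MeasurableSet Ω) :
    (ν ⊗ₘ hm.kernel) (Ω ×ˢ (mClosure m Ω)ᶜ) = 0 := by
  have hS := (measurableSet_mClosure hm hΩ).compl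
  rw [Measure.compProd_apply_prod hΩ hS, hrev.isReversible_kernel hm hΩ hS,
    ← Measure.compProd_apply_prod hS hΩ]
  exact compProd_compl_mClosure_prod_eq_zero hm hΩ

lemma dirichletForm_mClosure_eq_integral (hm : IsRandomWalk m) (hrev : Reversible m ν)
    (hΩ : MeasurableSet Ω) (hw : ∀ x ∉ Ω, w x = 0) :
    dirichletForm hm.kernel ν (mClosure m Ω) w w
      = ∫ p, (w p.2 - w p.1) * (w p.2 - w p.1) ∂(ν ⊗ₘ hm.kernel) := by
  refine setIntegral_eq_integral_of_ae_compl_eq_zero ?_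
  filter_upwards
    [measure_eq_zero_iff_ae_notMem.1 (compProd_prod_compl_mClosure_eq_zero hm hrev hΩ),
      measure_eq_zero_iff_ae_notMem.1 (compProd_compl_mClosure_prod_eq_zero hm hΩ)]
    with p hp₁ hp₂ hp
  have hx : p.1 ∉ Ω := fun h => hp₁ ⟨h, fun h' => hp ⟨Or.inl h, h'⟩⟩
  have hy : p.2 ∉ Ω := fun h => hp₂ ⟨fun h' => hp ⟨h', Or.inl h⟩, h⟩
  rw [hw _ hx, hw _ hy]
  ring

theorem IsStressFunction.dirichletForm_eq (hm : IsRandomWalk m) (hrev : Reversible m ν)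
    (hΩ : MeasurableSet Ω) (hfin : ν (mClosure m Ω) ≠ ⊤) (hf : IsStressFunction m ν Ω f)
    (hw : MemLp w 2 (ν.restrict (mClosure m Ω)))
    (hw0 : ∀ᵐ x ∂ν.restrict (mBoundary m Ω), w x = 0) :
    dirichletForm hm.kernel ν (mClosure m Ω) f w = 2 * ∫ x in Ω, w x ∂ν := by
  have hS := measurableSet_mClosure hm hΩ
  have hbdry : ∀ᵐ x ∂ν, x ∈ mClosure m Ω \ Ω →
      (∫ y in mClosure m Ω, (f y - f x) ∂(hm.kernel x)) * w x = 0 := by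
    filter_upwards [(ae_restrict_iff' (measurableSet_mBoundary hm hΩ)).1 hw0] with x hx hxS
    rw [hx (hxS.1.resolve_left hxS.2), mul_zero]
  have hinner : ∀ᵐ x ∂ν.restrict Ω,
      (∫ y in mClosure m Ω, (f y - f x) ∂(hm.kernel x)) * w x = -w x := by
    filter_upwards [hf.2.2] with x hx
    change (∫ y in mClosure m Ω, (f y - f x) ∂(m x)) * w x = -w x
    rw [show ∫ y in mClosure m Ω, (f y - f x) ∂(m x) = -1 by linarith]
    ring
  rw [dirichletForm_eq_neg_two_mul_integral (hrev.isReversible_kernel hm) hS hfin hf.memLp hw,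
    setIntegral_eq_of_subset_of_ae_sdiff_eq_zero hS.nullMeasurableSet Set.subset_union_left hbdry,
    integral_congr_ae hinner, integral_neg]
  ring

lemma dirichletForm_mClosure_indicator_of_subset (hm : IsRandomWalk m) (hrev : Reversible m ν)
    (hΩ : MeasurableSet Ω) (hΩ' : MeasurableSet Ω') (hsub : Ω' ⊆ Ω) :
    dirichletForm hm.kernel ν (mClosure m Ω) (Ω'.indicator g) (Ω'.indicator g)
      = dirichletForm hm.kernel ν (mClosure m Ω') (Ω'.indicator g) (Ω'.indicator g) := by
  rw [dirichletForm_mClosure_eq_integral hm hrev hΩ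
      fun _ hx => Set.indicator_of_notMem (hx ∘ (hsub ·)) g,
    dirichletForm_mClosure_eq_integral hm hrev hΩ' fun _ hx => Set.indicator_of_notMem hx g]

theorem IsStressFunction.dirichletForm_indicator_eq (hm : IsRandomWalk m)
    (hrev : Reversible m ν) (hΩ : MeasurableSet Ω) (hfin : ν (mClosure m Ω) ≠ ⊤)
    (hf : IsStressFunction m ν Ω f) (hΩ' : MeasurableSet Ω') (hsub : Ω' ⊆ Ω)
    (hg : MemLp g 2 (ν.restrict (mClosure m Ω'))) :
    dirichletForm hm.kernel ν (mClosure m Ω) f (Ω'.indicator g)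
      = 2 * ∫ x in Ω', g x ∂ν := by
  have hbdry : ∀ᵐ x ∂ν.restrict (mBoundary m Ω), Ω'.indicator g x = 0 :=
    ae_restrict_of_forall_mem (measurableSet_mBoundary hm hΩ)
      fun _ hx => Set.indicator_of_notMem (hx.1 ∘ (hsub ·)) g
  rw [hf.dirichletForm_eq hm hrev hΩ hfin (memLp_indicator_of_mClosure hΩ' hg _) hbdry,
    setIntegral_indicator hΩ', Set.inter_eq_right.2 hsub]

end RandomWalk

end RandomWalkSpace

theorem torsion_mono_general {X : Type*} [MeasurableSpace X]
    (m : X → Measure X) (ν : Measure X) [SigmaFinite ν]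
    (hm : RandomWalkSpace.IsRandomWalk m) (hrev : RandomWalkSpace.Reversible m ν)
    (Ω₁ Ω₂ : Set X) (hsub : Ω₁ ⊆ Ω₂)
    (hΩ₁ : MeasurableSet Ω₁) (hΩ₂ : MeasurableSet Ω₂)
    (h2₁ : ν (RandomWalkSpace.mClosure m Ω₁) < ⊤)
    (h2₂ : ν (RandomWalkSpace.mClosure m Ω₂) < ⊤)
    (f₁ f₂ : X → ℝ)
    (hf₁ : RandomWalkSpace.IsStressFunction m ν Ω₁ f₁)
    (hf₂ : RandomWalkSpace.IsStressFunction m ν Ω₂ f₂) :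
    ∫ x in Ω₁, f₁ x ∂ν ≤ ∫ x in Ω₂, f₂ x ∂ν := by
  open RandomWalkSpace in
  have hκ := hrev.isReversible_kernel hm
  have hQ₁ :
      dirichletForm hm.kernel ν (mClosure m Ω₁) (Ω₁.indicator f₁) (Ω₁.indicator f₁)
        = 2 * ∫ x in Ω₁, f₁ x ∂ν := by
    rw [dirichletForm_congr_ae_left hκ (measurableSet_mClosure hm hΩ₁) h2₁.ne
        (hf₁.indicator_ae_eq hm hΩ₁),
      hf₁.dirichletForm_indicator_eq hm hrev hΩ₁ h2₁.ne hΩ₁ subset_rfl hf₁.memLp]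
  have hQ₂ := hf₂.dirichletForm_eq hm hrev hΩ₂ h2₂.ne hf₂.memLp hf₂.1.2
  have hQ₂₁ := hf₂.dirichletForm_indicator_eq hm hrev hΩ₂ h2₂.ne hΩ₁ hsub hf₁.memLp
  have hQw := dirichletForm_mClosure_indicator_of_subset (g := f₁) hm hrev hΩ₂ hΩ₁ hsub
  have := two_mul_dirichletForm_le hκ (measurableSet_mClosure hm hΩ₂) h2₂.ne hf₂.memLp
    (memLp_indicator_of_mClosure hΩ₁ hf₁.memLp _)
  linarith

/-- monotonicity of the `m`-torsional rigidity: `Ω₁ ⊆ Ω₂ ⟹ T_m(Ω₁) ≤ T_m(Ω₂)`. -/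
theorem torsion_mono {X : Type*} [MeasurableSpace X]
    (m : X → Measure X) (ν : Measure X) [SigmaFinite ν]
    (hm : RandomWalkSpace.IsRandomWalk m) (hrev : RandomWalkSpace.Reversible m ν)
    (Ω₁ Ω₂ : Set X) (hsub : Ω₁ ⊆ Ω₂)
    (hΩ₁ : MeasurableSet Ω₁) (hΩ₂ : MeasurableSet Ω₂)
    (hconn₁ : RandomWalkSpace.mConnected m ν Ω₁)
    (hconnm₁ : RandomWalkSpace.mConnected m ν (RandomWalkSpace.mClosure m Ω₁))
    (h0₁ : 0 < ν Ω₁) (h1₁ : ν Ω₁ < ν (RandomWalkSpace.mClosure m Ω₁))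
    (h2₁ : ν (RandomWalkSpace.mClosure m Ω₁) < ⊤)
    (hpoinc₁ : RandomWalkSpace.PoincareInequality m ν Ω₁ 2)
    (hconn₂ : RandomWalkSpace.mConnected m ν Ω₂)
    (hconnm₂ : RandomWalkSpace.mConnected m ν (RandomWalkSpace.mClosure m Ω₂))
    (h0₂ : 0 < ν Ω₂) (h1₂ : ν Ω₂ < ν (RandomWalkSpace.mClosure m Ω₂))
    (h2₂ : ν (RandomWalkSpace.mClosure m Ω₂) < ⊤)
    (hpoinc₂ : RandomWalkSpace.PoincareInequality m ν Ω₂ 2)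
    (f₁ f₂ : X → ℝ)
    (hf₁ : RandomWalkSpace.IsStressFunction m ν Ω₁ f₁)
    (hf₂ : RandomWalkSpace.IsStressFunction m ν Ω₂ f₂) :
    ∫ x in Ω₁, f₁ x ∂ν ≤ ∫ x in Ω₂, f₂ x ∂ν :=
  torsion_mono_general m ν hm hrev Ω₁ Ω₂ hsub hΩ₁ hΩ₂ h2₁ h2₂ f₁ f₂ hf₁ hf₂
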